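/- Let E and F be Banach spaces, S ∈ L(E,F), 0 < p < ∞, and M > 0, and suppose the entropy numbers of S satisfy Σ_{n=1}^∞ e_n(S)ᵖ ≤ Mᵖ. Then S(B_E) is totally bounded and for every ε > 0 the ε-capacity satisfies H_ε(S(B_E)) ≤ Mᵖ/εᵖ. -/

import Mathlib

/-! Let `k` be the first index with `e_{k+1}(S) < ε`. The `k` earlier terms are all `≥ ε`, so
`k εᵖ ≤ ∑ eₙ(S)ᵖ ≤ Mᵖ`, while `S(B_E)` is covered by at most `2ᵏ` balls of radius `< ε`, which
have diameter `≤ 2ε`. Hence `H_ε(S(B_E)) ≤ k ≤ Mᵖ/εᵖ`, and total boundedness follows too. -/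

open NormedSpace Metric

noncomputable section

universe u v

def entropyNumber {E F : Type*} [NormedAddCommGroup E] [NormedSpace ℂ E]
    [NormedAddCommGroup F] [NormedSpace ℂ F] (n : ℕ) (S : E →L[ℂ] F) : ℝ :=
  sInf {δ : ℝ | 0 < δ ∧ ∃ (q : ℕ) (y : Fin q → F), q ≤ 2 ^ (n - 1) ∧
    S '' closedBall 0 1 ⊆ ⋃ i, closedBall (y i) δ}

def CoveredBy {F : Type*} [NormedAddCommGroup F] (A : Set F) (m : ℕ) (ε : ℝ) : Prop :=
  ∃ E : Fin m → Set F, A ⊆ ⋃ i, E i ∧ ∀ i, EMetric.diam (E i) ≤ ENNReal.ofReal (2 * ε)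

theorem exists_lt_and_mul_le_tsum {f : ℕ → ℝ} (hf : ∀ n, 0 ≤ f n) (hsum : Summable f)
    {c : ℝ} (hc : 0 < c) : ∃ k : ℕ, f k < c ∧ k * c ≤ ∑' n, f n := by
  have hex : ∃ k, f k < c :=
    (hsum.tendsto_atTop_zero.eventually (gt_mem_nhds hc)).exists
  refine ⟨Nat.find hex, Nat.find_spec hex, ?_⟩
  calc (Nat.find hex : ℝ) * c = ∑ _j ∈ Finset.range (Nat.find hex), c := by simp
    _ ≤ ∑ j ∈ Finset.range (Nat.find hex), f j :=
        Finset.sum_le_sum fun j hj => not_lt.1 (Nat.find_min hex (Finset.mem_range.1 hj))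
    _ ≤ ∑' n, f n := hsum.sum_le_tsum _ fun n _ => hf n

theorem Real.logb_two_le_of_le_two_pow {q k : ℕ} (hq : q ≤ 2 ^ k) : Real.logb 2 q ≤ k := by
  rcases Nat.eq_zero_or_pos q with rfl | hq_pos
  · simp
  · calc Real.logb 2 q ≤ Real.logb 2 (2 ^ k : ℕ) :=
          Real.logb_le_logb_of_le (by norm_num) (by exact_mod_cast hq_pos) (by exact_mod_cast hq)
      _ = k := by
          rw [Nat.cast_pow, Nat.cast_ofNat, Real.logb_pow, Real.logb_self_eq_one one_lt_two,
            mul_one]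

theorem coveredBy_of_subset_iUnion_closedBall {F : Type*} [NormedAddCommGroup F] {A : Set F}
    {q : ℕ} {y : Fin q → F} {δ ε : ℝ} (hA : A ⊆ ⋃ i, closedBall (y i) δ) (hδε : δ ≤ ε) :
    CoveredBy A q ε := by
  refine ⟨fun i => closedBall (y i) δ, hA, fun i => ediam_le_of_forall_dist_le fun a ha b hb => ?_⟩
  calc dist a b ≤ dist a (y i) + dist b (y i) := dist_triangle_right a b (y i)
    _ ≤ 2 * ε := by linarith [mem_closedBall.1 ha, mem_closedBall.1 hb]

theorem totallyBounded_of_forall_subset_iUnion_closedBall {F : Type*} [NormedAddCommGroup F]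
    {A : Set F} (h : ∀ ε > 0, ∃ (q : ℕ) (y : Fin q → F) (δ : ℝ), δ < ε ∧
      A ⊆ ⋃ i, closedBall (y i) δ) :
    TotallyBounded A := by
  refine totallyBounded_iff.2 fun ε hε => ?_
  obtain ⟨q, y, δ, hδε, hA⟩ := h ε hε
  refine ⟨Set.range y, Set.finite_range y, ?_⟩
  rw [Set.biUnion_range]
  exact hA.trans (Set.iUnion_mono fun i => closedBall_subset_ball hδε)

section EntropyNumber

variable {E F : Type*} [NormedAddCommGroup E] [NormedSpace ℂ E]
  [NormedAddCommGroup F] [NormedSpace ℂ F]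

theorem entropyNumber_nonneg (n : ℕ) (S : E →L[ℂ] F) : 0 ≤ entropyNumber n S :=
  Real.sInf_nonneg fun _ hδ => hδ.1.le

theorem exists_subset_iUnion_closedBall_of_entropyNumber_lt {n : ℕ} {S : E →L[ℂ] F} {ε : ℝ}
    (h : entropyNumber n S < ε) :
    ∃ (q : ℕ) (y : Fin q → F) (δ : ℝ), q ≤ 2 ^ (n - 1) ∧ δ < ε ∧
      S '' closedBall 0 1 ⊆ ⋃ i, closedBall (y i) δ := by
  have hne : {δ : ℝ | 0 < δ ∧ ∃ (q : ℕ) (y : Fin q → F), q ≤ 2 ^ (n - 1) ∧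
      S '' closedBall 0 1 ⊆ ⋃ i, closedBall (y i) δ}.Nonempty := by
    refine ⟨‖S‖ + 1, by positivity, 1, fun _ => 0, Nat.one_le_two_pow, ?_⟩
    rintro _ ⟨x, hx, rfl⟩
    refine Set.mem_iUnion.2 ⟨0, mem_closedBall_zero_iff.2 ?_⟩
    calc ‖S x‖ ≤ ‖S‖ * 1 := S.le_of_opNorm_le_of_le le_rfl (mem_closedBall_zero_iff.1 hx)
      _ ≤ ‖S‖ + 1 := by linarith
  obtain ⟨δ, ⟨-, q, y, hq, hcov⟩, hδε⟩ := exists_lt_of_csInf_lt hne h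
  exact ⟨q, y, δ, hq, hδε, hcov⟩

theorem exists_subset_iUnion_closedBall_of_summable_entropyNumber_rpow {S : E →L[ℂ] F}
    {p : ℝ} (hp : 0 < p) (hsum : Summable fun n : ℕ => entropyNumber (n + 1) S ^ p)
    {ε : ℝ} (hε : 0 < ε) :
    ∃ (k q : ℕ) (y : Fin q → F) (δ : ℝ), k * ε ^ p ≤ ∑' n : ℕ, entropyNumber (n + 1) S ^ p ∧
      q ≤ 2 ^ k ∧ δ < ε ∧ S '' closedBall 0 1 ⊆ ⋃ i, closedBall (y i) δ := by
  obtain ⟨k, hk_lt, hk_sum⟩ := exists_lt_and_mul_le_tsum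
    (fun n => Real.rpow_nonneg (entropyNumber_nonneg (n + 1) S) p) hsum (Real.rpow_pos_of_pos hε p)
  have hk : entropyNumber (k + 1) S < ε :=
    (Real.rpow_lt_rpow_iff (entropyNumber_nonneg _ _) hε.le hp).1 hk_lt
  obtain ⟨q, y, δ, hq, hδε, hcov⟩ := exists_subset_iUnion_closedBall_of_entropyNumber_lt hk
  exact ⟨k, q, y, δ, hk_sum, by simpa using hq, hδε, hcov⟩

end EntropyNumber

theorem capacity_le_of_entropy_summable_general
    {E : Type u} [NormedAddCommGroup E] [NormedSpace ℂ E]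
    {F : Type v} [NormedAddCommGroup F] [NormedSpace ℂ F]
    (S : E →L[ℂ] F) (p : ℝ) (hp : 0 < p) (M : ℝ)
    (hsum : Summable (fun n : ℕ => entropyNumber (n + 1) S ^ p))
    (hle : (∑' n : ℕ, entropyNumber (n + 1) S ^ p) ≤ M ^ p) :
    TotallyBounded (S '' closedBall 0 1) ∧
    ∀ ε > (0 : ℝ), ∃ m : ℕ,
      CoveredBy (S '' closedBall 0 1) m ε ∧
      Real.logb 2 m ≤ M ^ p / ε ^ p := by
  have hcover := fun ε (hε : 0 < ε) =>
    exists_subset_iUnion_closedBall_of_summable_entropyNumber_rpow hp hsum hε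
  refine ⟨totallyBounded_of_forall_subset_iUnion_closedBall fun ε hε => ?_, fun ε hε => ?_⟩
  · obtain ⟨-, q, y, δ, -, -, hδε, hA⟩ := hcover ε hε
    exact ⟨q, y, δ, hδε, hA⟩
  · obtain ⟨k, q, y, δ, hk, hq, hδε, hA⟩ := hcover ε hε
    refine ⟨q, coveredBy_of_subset_iUnion_closedBall hA hδε.le, ?_⟩
    calc Real.logb 2 q ≤ k := Real.logb_two_le_of_le_two_pow hq
      _ ≤ M ^ p / ε ^ p := (le_div_iff₀ (Real.rpow_pos_of_pos hε p)).2 (hk.trans hle)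

/-- If the entropy numbers of `S` satisfy `∑_{n≥1} e_n(S)ᵖ ≤ Mᵖ`, then `S(B_E)` is totally
bounded and its `ε`-capacity satisfies `H_ε(S(B_E)) ≤ Mᵖ/εᵖ` for every `ε > 0`. -/
theorem capacity_le_of_entropy_summable
    {E : Type u} [NormedAddCommGroup E] [NormedSpace ℂ E]
    {F : Type v} [NormedAddCommGroup F] [NormedSpace ℂ F]
    (S : E →L[ℂ] F) (p : ℝ) (hp : 0 < p) (M : ℝ) (hM : 0 < M)
    (hsum : Summable (fun n : ℕ => entropyNumber (n + 1) S ^ p))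
    (hle : (∑' n : ℕ, entropyNumber (n + 1) S ^ p) ≤ M ^ p) :
    TotallyBounded (S '' closedBall 0 1) ∧
    ∀ ε > (0 : ℝ), ∃ m : ℕ,
      CoveredBy (S '' closedBall 0 1) m ε ∧
      Real.logb 2 m ≤ M ^ p / ε ^ p :=
  capacity_le_of_entropy_summable_general S p hp M hsum hle

end
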